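/- Let V_1 = ∑_{i=1}^{r} W_i^1 and V_2 = ∑_{j=1}^{s} W_j^2 be finite sums of γ-sets, viewed as multisets (an element occurring in k of the sets is counted k times). Then either the multiset difference V_1 \ V_2 is finite, or its density D(V_1 \ V_2) is strictly positive; in the latter case V_1 \ V_2 is a union of γ-sets and a finite set. -/

import Mathlib

open Filter Topology

noncomputable section

/-- The γ(α,β)-set `{−(n+β)/α : n ∈ ℕ ∪ {0}} ⊆ ℂ`. -/
def gammaSet (α : ℝ) (β : ℂ) : Set ℂ :=
  {z : ℂ | ∃ n : ℕ, z = -((n : ℂ) + β) / (α : ℂ)}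

/-- The multiplicity function of the multiset sum `∑_i W_i` of the γ-sets
`W_i = γ(α_i, β_i)`: an element occurring in `k` of the sets is counted `k` times. -/
def gammaMult {r : ℕ} (α : Fin r → ℝ) (β : Fin r → ℂ) (z : ℂ) : ℕ :=
  ∑ i : Fin r, Set.indicator (gammaSet (α i) (β i)) (fun _ => 1) z

/-- The counting function (with multiplicity) `N(T) = ∑_{Re z > −T} m(z)` of a multiset of
complex numbers given by its multiplicity function `m`. -/
def multCount (m : ℂ → ℕ) (T : ℝ) : ℝ :=
  ∑ᶠ z ∈ {z : ℂ | -T < z.re}, (m z : ℝ)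

/-- A multiset of complex numbers (given by its multiplicity function) has density `d` if
`N(T)/T → d` as `T → ∞`. -/
def HasMultDensity (m : ℂ → ℕ) (d : ℝ) : Prop :=
  Tendsto (fun T : ℝ => multCount m T / T) atTop (𝓝 d)

end

/-!
Subtract the γ-sets of `V₂` one at a time from a sum of γ-sets plus a finite multiset. Fix
`W = γ(α, β)`, so `W = {z₀ - n d}` with `z₀ = -β/α`, `d = 1/α`, and consider the grid `z₀ - ℚ d`.
A γ-set meeting the grid in two points lies, like `W`, on a lattice `z₀ - ℤ d/Q`; the others meet
it in finitely many points, so up to a finite multiset they may be replaced by tails avoiding the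
grid, and these do not interact with `W`. On a common lattice the multiplicity of
"commensurable part minus `W`" vanishes far to the left and is periodic far to the right, so it is
a sum of γ-sets over the residue classes plus a finite multiset.

Since `γ(α, β)` has `⌈αT - Re β⌉₊` points with `Re z > -T`, a sum of γ-sets has density the sum
of the `α`s, which is positive unless the sum is empty.
-/

open Function Set

noncomputable section

/-! ### Sums of γ-sets plus finite multisets -/

def gammaInd (p : ℝ × ℂ) : ℂ → ℕ := (gammaSet p.1 p.2).indicator fun _ => 1

def gammaSumMult : Multiset (ℝ × ℂ) →+ (ℂ → ℕ) :=
  Multiset.sumAddMonoidHom.comp (Multiset.mapAddMonoidHom gammaInd)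

@[simp] lemma gammaSumMult_singleton (p : ℝ × ℂ) : gammaSumMult {p} = gammaInd p := by
  simp [gammaSumMult]

lemma gammaSumMult_cons (p : ℝ × ℂ) (s : Multiset (ℝ × ℂ)) :
    gammaSumMult (p ::ₘ s) = gammaInd p + gammaSumMult s := by
  rw [← Multiset.singleton_add, map_add, gammaSumMult_singleton]

lemma gammaMult_eq_gammaSumMult {r : ℕ} (α : Fin r → ℝ) (β : Fin r → ℂ) :
    gammaMult α β = gammaSumMult (Finset.univ.val.map fun i => (α i, β i)) := by
  ext z
  simp [gammaMult, gammaSumMult, gammaInd, Finset.sum_eq_multiset_sum, Function.comp_def,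
    Pi.list_sum_apply]

lemma gammaSumMult_apply (s : Multiset (ℝ × ℂ)) (z : ℂ) :
    gammaSumMult s z = (s.map fun p => gammaInd p z).sum := by
  simp [gammaSumMult, Pi.multiset_sum_apply]

lemma exists_mem_gammaSet_of_gammaSumMult_ne_zero {s : Multiset (ℝ × ℂ)} {z : ℂ}
    (h : gammaSumMult s z ≠ 0) : ∃ p ∈ s, z ∈ gammaSet p.1 p.2 := by
  by_contra! hs
  refine h ((gammaSumMult_apply s z).trans (Multiset.sum_eq_zero fun x hx => ?_))
  obtain ⟨p, hp, rfl⟩ := Multiset.mem_map.1 hx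
  exact indicator_of_notMem (hs p hp) _

lemma exists_eq_map_univ_pair (s : Multiset (ℝ × ℂ)) :
    ∃ (k : ℕ) (α : Fin k → ℝ) (β : Fin k → ℂ), s = Finset.univ.val.map fun i => (α i, β i) :=
  ⟨_, fun i => (s.toList.get i).1, fun i => (s.toList.get i).2, by
    rw [Fin.univ_val_map, List.ofFn_get, Multiset.coe_toList]⟩

lemma forall_mem_map_univ_pos {k : ℕ} {α : Fin k → ℝ} (hα : ∀ i, 0 < α i) (β : Fin k → ℂ) :
    ∀ p ∈ Finset.univ.val.map (fun i => (α i, β i)), 0 < p.1 := by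
  simpa using hα

def IsGammaSumAddFinite (f : ℂ → ℕ) : Prop :=
  ∃ s : Multiset (ℝ × ℂ), (∀ p ∈ s, 0 < p.1) ∧
    ∃ e : ℂ → ℕ, e.support.Finite ∧ f = gammaSumMult s + e

lemma exists_eq_add_of_le {X : Type*} {f g : X → ℕ} (hle : g ≤ f)
    (hfin : {x | g x ≠ f x}.Finite) : ∃ e : X → ℕ, e.support.Finite ∧ f = g + e :=
  ⟨f - g, hfin.subset fun x hx h => hx (by simp [h]),
    by ext x; have : g x ≤ f x := hle x; simp only [Pi.add_apply, Pi.sub_apply]; omega⟩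

lemma isGammaSumAddFinite_gammaSumMult {s : Multiset (ℝ × ℂ)} (hs : ∀ p ∈ s, 0 < p.1) :
    IsGammaSumAddFinite (gammaSumMult s) :=
  ⟨s, hs, 0, by simp, (add_zero _).symm⟩

namespace IsGammaSumAddFinite

lemma add {f g : ℂ → ℕ} (hf : IsGammaSumAddFinite f) (hg : IsGammaSumAddFinite g) :
    IsGammaSumAddFinite (f + g) := by
  obtain ⟨s, hs, e, he, rfl⟩ := hf
  obtain ⟨t, ht, e', he', rfl⟩ := hg
  refine ⟨s + t, ?_, e + e', (he.union he').subset (support_add _ _), ?_⟩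
  · simpa [or_imp, forall_and] using And.intro hs ht
  · rw [map_add]; abel

lemma of_le {f g : ℂ → ℕ} (hg : IsGammaSumAddFinite g) (hle : g ≤ f)
    (hfin : {z | g z ≠ f z}.Finite) : IsGammaSumAddFinite f := by
  obtain ⟨s, hs, e, he, rfl⟩ := hg
  obtain ⟨e', he', rfl⟩ := exists_eq_add_of_le hle hfin
  exact ⟨s, hs, e + e', (he.union he').subset (support_add _ _), by abel⟩

end IsGammaSumAddFinite

/-! ### γ-sets on a lattice -/

def gammaPt (α : ℝ) (β : ℂ) (n : ℕ) : ℂ := -((n : ℂ) + β) / α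

lemma gammaSet_eq_range (α : ℝ) (β : ℂ) : gammaSet α β = range (gammaPt α β) := by
  ext z; simp [gammaSet, gammaPt, eq_comm]

lemma gammaPt_injective {α : ℝ} (hα : α ≠ 0) (β : ℂ) : Injective (gammaPt α β) := by
  intro m n h
  simpa [gammaPt, div_left_inj' (Complex.ofReal_ne_zero.2 hα)] using h

lemma gammaPt_add_nat (α : ℝ) (β : ℂ) (N n : ℕ) : gammaPt α (β + N) n = gammaPt α β (n + N) := by
  simp only [gammaPt]; push_cast; ring

def latticePt (z₀ : ℂ) (d : ℝ) (m : ℤ) : ℂ := z₀ - m * d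

lemma latticePt_injective (z₀ : ℂ) {d : ℝ} (hd : d ≠ 0) : Injective (latticePt z₀ d) := by
  intro m n h
  simpa [latticePt, hd] using h

def intProg (a : ℤ) (c : ℕ) : Set ℤ := {m | a ≤ m ∧ (c : ℤ) ∣ m - a}

lemma mem_intProg_iff {a m : ℤ} {c : ℕ} : m ∈ intProg a c ↔ ∃ n : ℕ, m = a + n * c := by
  constructor
  · rintro ⟨ham, t, ht⟩
    obtain ⟨k, rfl⟩ := Int.le.dest ham
    obtain ⟨n, rfl⟩ := (Int.natCast_dvd_natCast (m := c) (n := k)).1 ⟨t, by omega⟩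
    exact ⟨n, by push_cast; ring⟩
  · rintro ⟨n, rfl⟩
    exact ⟨le_add_of_nonneg_right (by positivity), n, by ring⟩

def OnLattice (z₀ : ℂ) (d : ℝ) (p : ℝ × ℂ) : Prop :=
  ∃ (a : ℤ) (c : ℕ), 0 < c ∧ ∀ n : ℕ, gammaPt p.1 p.2 n = latticePt z₀ d (a + n * c)

section Lattice

variable {z₀ : ℂ} {d : ℝ} {p : ℝ × ℂ} {a : ℤ} {c : ℕ}

lemma gammaSet_eq_image_intProg (h : ∀ n : ℕ, gammaPt p.1 p.2 n = latticePt z₀ d (a + n * c)) :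
    gammaSet p.1 p.2 = latticePt z₀ d '' intProg a c := by
  ext z
  simp only [gammaSet_eq_range, mem_range, mem_image, mem_intProg_iff]
  constructor
  · rintro ⟨n, rfl⟩; exact ⟨_, ⟨n, rfl⟩, (h n).symm⟩
  · rintro ⟨_, ⟨n, rfl⟩, rfl⟩; exact ⟨n, h n⟩

lemma gammaInd_comp_latticePt (hd : d ≠ 0)
    (h : ∀ n : ℕ, gammaPt p.1 p.2 n = latticePt z₀ d (a + n * c)) :
    gammaInd p ∘ latticePt z₀ d = (intProg a c).indicator 1 := by
  ext m
  rw [comp_apply, gammaInd, gammaSet_eq_image_intProg h,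
    indicator_image (latticePt_injective z₀ hd)]
  rfl

end Lattice

namespace OnLattice

variable {z₀ : ℂ} {d : ℝ} {p : ℝ × ℂ}

lemma gammaSet_subset (h : OnLattice z₀ d p) : gammaSet p.1 p.2 ⊆ range (latticePt z₀ d) := by
  obtain ⟨a, c, -, h⟩ := h
  exact gammaSet_eq_image_intProg h ▸ image_subset_range _ _

lemma div_nat (h : OnLattice z₀ d p) {k : ℕ} (hk : 0 < k) : OnLattice z₀ (d / k) p := by
  obtain ⟨a, c, hc, h⟩ := h
  refine ⟨k * a, k * c, by positivity, fun n => ?_⟩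
  have : (k : ℂ) ≠ 0 := by exact_mod_cast hk.ne'
  rw [h n]; simp only [latticePt]; push_cast; field_simp

end OnLattice

lemma onLattice_self (α : ℝ) (β : ℂ) : OnLattice (-β / α) α⁻¹ (α, β) :=
  ⟨0, 1, one_pos, fun n => by simp only [gammaPt, latticePt]; push_cast; ring⟩

def latticeGamma (z₀ : ℂ) (d : ℝ) (a : ℤ) (c : ℕ) : ℝ × ℂ :=
  (((c : ℝ) * d)⁻¹, -latticePt z₀ d a / ((c * d : ℝ) : ℂ))

lemma gammaPt_latticeGamma (z₀ : ℂ) {d : ℝ} (hd : d ≠ 0) (a : ℤ) {c : ℕ} (hc : c ≠ 0) (n : ℕ) :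
    gammaPt (latticeGamma z₀ d a c).1 (latticeGamma z₀ d a c).2 n = latticePt z₀ d (a + n * c) := by
  have : (c : ℂ) ≠ 0 := by exact_mod_cast hc
  have : (d : ℂ) ≠ 0 := by exact_mod_cast hd
  simp only [gammaPt, latticeGamma, latticePt]
  push_cast
  field_simp
  ring

def ratGrid (z₀ : ℂ) (d : ℝ) : Set ℂ := {z | ∃ q : ℚ, z = z₀ - q * d}

lemma range_latticePt_div_subset_ratGrid (z₀ : ℂ) (d : ℝ) (Q : ℕ) :
    range (latticePt z₀ (d / Q)) ⊆ ratGrid z₀ d := by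
  rintro _ ⟨m, rfl⟩
  exact ⟨m / Q, by simp only [latticePt]; push_cast; ring⟩

lemma exists_rat_param_of_mem_ratGrid {α d : ℝ} {β z₀ : ℂ} (hα : 0 < α) (hd : 0 < d)
    {n₁ n₂ : ℕ} (hn : n₁ ≠ n₂) (h₁ : gammaPt α β n₁ ∈ ratGrid z₀ d)
    (h₂ : gammaPt α β n₂ ∈ ratGrid z₀ d) :
    ∃ t r : ℚ, 0 < r ∧ ∀ n : ℕ, gammaPt α β n = z₀ - (t + n * r) * d := by
  obtain ⟨q₁, hq₁⟩ := h₁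
  obtain ⟨q₂, hq₂⟩ := h₂
  have hαC : (α : ℂ) ≠ 0 := by exact_mod_cast hα.ne'
  have hnC : (n₂ : ℂ) - n₁ ≠ 0 := sub_ne_zero.2 (by exact_mod_cast hn.symm)
  set r : ℚ := (q₂ - q₁) / (n₂ - n₁)
  have hstep : ((α⁻¹ : ℝ) : ℂ) = r * d := by
    simp only [gammaPt, r] at hq₁ hq₂ ⊢
    push_cast
    field_simp at hq₁ hq₂ ⊢
    linear_combination hq₁ - hq₂
  have hr : 0 < r := by
    have hstepR : α⁻¹ = r * d := by exact_mod_cast hstep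
    have : (0 : ℝ) < r * d := hstepR ▸ inv_pos.2 hα
    exact_mod_cast pos_of_mul_pos_left this hd.le
  refine ⟨q₁ - n₁ * r, r, hr, fun n => ?_⟩
  have : gammaPt α β n = gammaPt α β n₁ - (n - n₁) * ((α⁻¹ : ℝ) : ℂ) := by
    simp only [gammaPt]; push_cast; ring
  rw [this, hq₁, hstep]
  push_cast
  ring

lemma exists_onLattice_of_rat_param {α d : ℝ} {β z₀ : ℂ} {t r : ℚ} (hr : 0 < r)
    (h : ∀ n : ℕ, gammaPt α β n = z₀ - (t + n * r) * d) :
    ∃ Q : ℕ, 0 < Q ∧ OnLattice z₀ (d / Q) (α, β) := by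
  set Q := t.den * r.den
  have hQ : 0 < Q := Nat.mul_pos t.den_pos r.den_pos
  have hQC : (Q : ℂ) ≠ 0 := by exact_mod_cast hQ.ne'
  obtain ⟨a, ha⟩ : ∃ a : ℤ, (a : ℚ) = t * Q :=
    ⟨t.num * r.den, by simp only [Q]; push_cast; rw [← mul_assoc, Rat.mul_den_eq_num]⟩
  obtain ⟨c, hc, hcQ⟩ : ∃ c : ℕ, 0 < c ∧ (c : ℚ) = r * Q := by
    have hnum := Rat.num_pos.2 hr
    obtain ⟨c, hc⟩ := Int.eq_ofNat_of_zero_le hnum.le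
    refine ⟨c * t.den, Nat.mul_pos (by omega) t.den_pos, ?_⟩
    simp only [Q]; push_cast
    rw [← mul_assoc, mul_right_comm, Rat.mul_den_eq_num, hc]; push_cast; ring
  refine ⟨Q, hQ, a, c, hc, fun n => ?_⟩
  have hac : ((a + n * c : ℤ) : ℂ) = (t + n * r) * Q := by
    have : ((a + n * c : ℤ) : ℚ) = (t + n * r) * Q := by push_cast; rw [ha, hcQ]; ring
    exact_mod_cast congrArg (fun x : ℚ => (x : ℂ)) this
  rw [h n, latticePt, hac]
  push_cast
  field_simp

lemma onLattice_or_finite_inter_ratGrid {p : ℝ × ℂ} (hp : 0 < p.1) (z₀ : ℂ) {d : ℝ} (hd : 0 < d) :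
    (∃ Q : ℕ, 0 < Q ∧ OnLattice z₀ (d / Q) p) ∨ (gammaSet p.1 p.2 ∩ ratGrid z₀ d).Finite := by
  refine or_iff_not_imp_right.2 fun hinf => ?_
  rw [gammaSet_eq_range] at hinf
  obtain ⟨_, ⟨⟨n₁, rfl⟩, h₁⟩, _, ⟨⟨n₂, rfl⟩, h₂⟩, hne⟩ := Set.Infinite.nontrivial hinf
  obtain ⟨t, r, hr, hpar⟩ := exists_rat_param_of_mem_ratGrid hp hd (ne_of_apply_ne _ hne) h₁ h₂
  exact exists_onLattice_of_rat_param hr hpar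

/-! ### Residue classes on a lattice -/

def IsZeroAtBotPeriodicAtTop (F : ℤ → ℕ) : Prop :=
  F =ᶠ[atBot] 0 ∧ ∃ (Φ : ℤ → ℕ) (P : ℕ), 0 < P ∧ Periodic Φ P ∧ F =ᶠ[atTop] Φ

namespace IsZeroAtBotPeriodicAtTop

lemma zero : IsZeroAtBotPeriodicAtTop 0 :=
  ⟨EventuallyEq.rfl, 0, 1, one_pos, fun _ => rfl, EventuallyEq.rfl⟩

lemma map₂ {F G : ℤ → ℕ} (op : ℕ → ℕ → ℕ) (hop : op 0 0 = 0)
    (hF : IsZeroAtBotPeriodicAtTop F) (hG : IsZeroAtBotPeriodicAtTop G) :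
    IsZeroAtBotPeriodicAtTop fun m => op (F m) (G m) := by
  obtain ⟨hF₀, Φ, P, hP, hΦ, hFΦ⟩ := hF
  obtain ⟨hG₀, Ψ, R, hR, hΨ, hGΨ⟩ := hG
  have hΦ' : Periodic Φ (P * R : ℕ) := by simpa [mul_comm] using hΦ.nat_mul R
  have hΨ' : Periodic Ψ (P * R : ℕ) := by simpa using hΨ.nat_mul P
  refine ⟨?_, fun m => op (Φ m) (Ψ m), P * R, Nat.mul_pos hP hR, fun m => ?_, ?_⟩
  · filter_upwards [hF₀, hG₀] with m h₁ h₂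
    simp [h₁, h₂, hop]
  · simp only [hΦ' m, hΨ' m]
  · filter_upwards [hFΦ, hGΨ] with m h₁ h₂
    simp [h₁, h₂]

lemma add {F G : ℤ → ℕ} (hF : IsZeroAtBotPeriodicAtTop F) (hG : IsZeroAtBotPeriodicAtTop G) :
    IsZeroAtBotPeriodicAtTop (F + G) :=
  map₂ (· + ·) rfl hF hG

lemma tsub {F G : ℤ → ℕ} (hF : IsZeroAtBotPeriodicAtTop F) (hG : IsZeroAtBotPeriodicAtTop G) :
    IsZeroAtBotPeriodicAtTop (F - G) :=
  map₂ (· - ·) rfl hF hG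

end IsZeroAtBotPeriodicAtTop

lemma isZeroAtBotPeriodicAtTop_indicator_intProg (a : ℤ) {c : ℕ} (hc : 0 < c) :
    IsZeroAtBotPeriodicAtTop ((intProg a c).indicator 1) := by
  refine ⟨?_, {m | (c : ℤ) ∣ m - a}.indicator 1, c, hc, fun m => ?_, ?_⟩
  · filter_upwards [eventually_lt_atBot a] with m hm
    exact indicator_of_notMem (fun h => hm.not_ge h.1) _
  · simp only [indicator_apply, mem_ofPred_eq, Pi.one_apply, show m + c - a = m - a + c by ring,
      dvd_add_self_right]
  · filter_upwards [eventually_ge_atTop a] with m hm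
    simp [indicator, intProg, hm]

lemma OnLattice.isZeroAtBotPeriodicAtTop {z₀ : ℂ} {d : ℝ} {p : ℝ × ℂ} (h : OnLattice z₀ d p)
    (hd : d ≠ 0) : IsZeroAtBotPeriodicAtTop (gammaInd p ∘ latticePt z₀ d) := by
  obtain ⟨a, c, hc, h⟩ := h
  rw [gammaInd_comp_latticePt hd h]
  exact isZeroAtBotPeriodicAtTop_indicator_intProg a hc

lemma isZeroAtBotPeriodicAtTop_gammaSumMult {z₀ : ℂ} {d : ℝ} (hd : d ≠ 0)
    {s : Multiset (ℝ × ℂ)} (hs : ∀ p ∈ s, OnLattice z₀ d p) :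
    IsZeroAtBotPeriodicAtTop (gammaSumMult s ∘ latticePt z₀ d) := by
  induction s using Multiset.induction_on with
  | empty => exact .zero
  | cons p s ih =>
    rw [Multiset.forall_mem_cons] at hs
    rw [gammaSumMult_cons]
    exact (hs.1.isZeroAtBotPeriodicAtTop hd).add (ih hs.2)

lemma sum_mul_indicator_intProg {Φ : ℤ → ℕ} {P : ℕ} (hP : 0 < P) (hΦ : Periodic Φ P)
    (M m : ℤ) :
    ∑ ρ ∈ Finset.range P, Φ (M + ρ) * (intProg (M + ρ) P).indicator 1 m =
      if M ≤ m then Φ m else 0 := by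
  split_ifs with hm
  · obtain ⟨k, rfl⟩ := Int.le.dest hm
    have hk : M + k = M + ↑(k % P) + ↑(k / P) * P := by
      rw [add_assoc, ← Nat.cast_mul, ← Nat.cast_add, Nat.mod_add_div']
    rw [Finset.sum_eq_single (k % P)]
    · rw [indicator_of_mem (mem_intProg_iff.2 ⟨k / P, hk⟩), Pi.one_apply, mul_one, hk,
        hΦ.nat_mul (k / P)]
    · intro ρ hρ hne
      refine mul_eq_zero_of_right _ (indicator_of_notMem (fun hmem => hne ?_) _)
      obtain ⟨n, hn⟩ := mem_intProg_iff.1 hmem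
      have : k = ρ + n * P := by exact_mod_cast (by linarith : (k : ℤ) = ρ + n * P)
      rw [this, Nat.add_mul_mod_self_right, Nat.mod_eq_of_lt (Finset.mem_range.1 hρ)]
    · exact fun h => absurd (Finset.mem_range.2 (Nat.mod_lt _ hP)) h
  · refine Finset.sum_eq_zero fun ρ _ => mul_eq_zero_of_right _ (indicator_of_notMem ?_ _)
    exact fun hmem => hm (le_trans (by simp) hmem.1)

lemma exists_gammaSumMult_latticePt_eq_ite (z₀ : ℂ) {d : ℝ} (hd : 0 < d) {Φ : ℤ → ℕ} {P : ℕ}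
    (hP : 0 < P) (hΦ : Periodic Φ P) (M : ℤ) :
    ∃ s : Multiset (ℝ × ℂ), (∀ p ∈ s, 0 < p.1) ∧
      (∀ m, gammaSumMult s (latticePt z₀ d m) = if M ≤ m then Φ m else 0) ∧
      ∀ z ∉ range (latticePt z₀ d), gammaSumMult s z = 0 := by
  set q : ℕ → ℝ × ℂ := fun ρ => latticeGamma z₀ d (M + ρ) P
  have hq (ρ n : ℕ) : gammaPt (q ρ).1 (q ρ).2 n = latticePt z₀ d (M + ρ + n * P) :=
    gammaPt_latticeGamma z₀ hd.ne' _ hP.ne' n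
  set s := ∑ ρ ∈ Finset.range P, Φ (M + ρ) • ({q ρ} : Multiset (ℝ × ℂ))
  have hs_apply (z : ℂ) :
      gammaSumMult s z = ∑ ρ ∈ Finset.range P, Φ (M + ρ) * gammaInd (q ρ) z := by
    simp [s, map_sum, map_nsmul, Finset.sum_apply]
  refine ⟨s, fun p hp => ?_, fun m => ?_, fun z hz => ?_⟩
  · obtain ⟨ρ, -, hp⟩ := Multiset.mem_sum.1 hp
    rw [Multiset.mem_singleton.1 (Multiset.mem_of_mem_nsmul hp)]
    exact inv_pos.2 (mul_pos (Nat.cast_pos.2 hP) hd)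
  · rw [hs_apply, ← sum_mul_indicator_intProg hP hΦ M m]
    refine Finset.sum_congr rfl fun ρ _ => ?_
    rw [← gammaInd_comp_latticePt hd.ne' (hq ρ)]
    rfl
  · rw [hs_apply]
    refine Finset.sum_eq_zero fun ρ _ => mul_eq_zero_of_right _ (indicator_of_notMem ?_ _)
    exact fun hmem => hz ((gammaSet_eq_image_intProg (hq ρ) ▸ image_subset_range _ _) hmem)

lemma isGammaSumAddFinite_of_comp_latticePt {h : ℂ → ℕ} {z₀ : ℂ} {d : ℝ} (hd : 0 < d)
    (hsupp : support h ⊆ range (latticePt z₀ d))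
    (hh : IsZeroAtBotPeriodicAtTop (h ∘ latticePt z₀ d)) : IsGammaSumAddFinite h := by
  obtain ⟨hbot, Φ, P, hP, hΦ, htop⟩ := hh
  obtain ⟨L, hL⟩ := eventually_atBot.1 hbot
  obtain ⟨M, hM⟩ := eventually_atTop.1 htop
  obtain ⟨s, hs, hs_lattice, hs_off⟩ := exists_gammaSumMult_latticePt_eq_ite z₀ hd hP hΦ M
  set g := latticePt z₀ d
  have hh_off (z : ℂ) (hz : z ∉ range g) : h z = 0 :=
    notMem_support.1 fun h' => hz (hsupp h')
  refine (isGammaSumAddFinite_gammaSumMult hs).of_le (fun z => ?_)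
    (((finite_Ioo L M).image g).subset fun z hz => ?_)
  · by_cases hz : z ∈ range g
    · obtain ⟨m, rfl⟩ := hz
      rw [hs_lattice]
      split_ifs with hm
      · exact (hM m hm).ge
      · exact Nat.zero_le _
    · rw [hs_off z hz]
      exact Nat.zero_le _
  · by_cases hzr : z ∈ range g
    · obtain ⟨m, rfl⟩ := hzr
      refine ⟨m, ⟨lt_of_not_ge fun hmL => hz ?_, lt_of_not_ge fun hmM => hz ?_⟩, rfl⟩
      · rw [hs_lattice]
        split_ifs with hm
        · exact (hM m hm).symm
        · exact (hL m hmL).symm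
      · rw [hs_lattice, if_pos hmM]
        exact (hM m hmM).symm
    · exact absurd (by rw [hs_off z hzr, hh_off z hzr]) hz

lemma isGammaSumAddFinite_tsub_of_onLattice {z₀ : ℂ} {d : ℝ} (hd : 0 < d)
    {s : Multiset (ℝ × ℂ)} (hs : ∀ p ∈ s, OnLattice z₀ d p) {w : ℝ × ℂ}
    (hw : OnLattice z₀ d w) : IsGammaSumAddFinite (gammaSumMult s - gammaInd w) := by
  refine isGammaSumAddFinite_of_comp_latticePt hd (fun z hz => ?_)
    ((isZeroAtBotPeriodicAtTop_gammaSumMult hd.ne' hs).tsub (hw.isZeroAtBotPeriodicAtTop hd.ne'))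
  have : gammaSumMult s z ≠ 0 := fun h0 => hz (by simp [h0])
  obtain ⟨p, hp, hzp⟩ := exists_mem_gammaSet_of_gammaSumMult_ne_zero this
  exact (hs p hp).gammaSet_subset hzp

/-! ### Subtracting a γ-set -/

lemma exists_onLattice_div_of_forall {z₀ : ℂ} {d : ℝ} {s : Multiset (ℝ × ℂ)}
    (hs : ∀ p ∈ s, ∃ Q : ℕ, 0 < Q ∧ OnLattice z₀ (d / Q) p) :
    ∃ Q : ℕ, 0 < Q ∧ ∀ p ∈ s, OnLattice z₀ (d / Q) p := by
  induction s using Multiset.induction_on with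
  | empty => exact ⟨1, one_pos, by simp⟩
  | cons p s ih =>
    rw [Multiset.forall_mem_cons] at hs
    obtain ⟨Q₁, hQ₁, hp⟩ := hs.1
    obtain ⟨Q₂, hQ₂, hs'⟩ := ih hs.2
    refine ⟨Q₁ * Q₂, Nat.mul_pos hQ₁ hQ₂, Multiset.forall_mem_cons.2 ⟨?_, fun q hq => ?_⟩⟩
    · simpa only [Nat.cast_mul, div_div] using hp.div_nat hQ₂
    · simpa only [Nat.cast_mul, div_div, mul_comm] using (hs' q hq).div_nat hQ₁

lemma exists_disjoint_gammaSet_add_nat {α : ℝ} (hα : α ≠ 0) {β : ℂ} {S : Set ℂ}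
    (h : (gammaSet α β ∩ S).Finite) : ∃ N : ℕ, Disjoint (gammaSet α (β + N)) S := by
  rw [gammaSet_eq_range] at h
  obtain ⟨N, hN⟩ := ((h.preimage (gammaPt_injective hα β).injOn).subset
    fun n hn => ⟨⟨n, rfl⟩, hn⟩ : {n | gammaPt α β n ∈ S}.Finite).bddAbove
  refine ⟨N + 1, disjoint_left.2 ?_⟩
  rw [gammaSet_eq_range]
  rintro _ ⟨n, rfl⟩ hS
  rw [gammaPt_add_nat] at hS
  have := hN hS
  omega

lemma gammaSet_add_nat_subset (α : ℝ) (β : ℂ) (N : ℕ) : gammaSet α (β + N) ⊆ gammaSet α β := by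
  rw [gammaSet_eq_range, gammaSet_eq_range]
  rintro _ ⟨n, rfl⟩
  exact ⟨n + N, (gammaPt_add_nat α β N n).symm⟩

lemma exists_gammaInd_eq_add_nat_add (p : ℝ × ℂ) (N : ℕ) :
    ∃ e : ℂ → ℕ, e.support.Finite ∧ gammaInd p = gammaInd (p.1, p.2 + N) + e := by
  have hsub := gammaSet_add_nat_subset p.1 p.2 N
  refine exists_eq_add_of_le (indicator_le_indicator_of_subset hsub fun _ => Nat.zero_le _)
    (((finite_lt_nat N).image (gammaPt p.1 p.2)).subset fun z hz => ?_)
  by_cases hzN : z ∈ gammaSet p.1 (p.2 + N)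
  · simp [gammaInd, hzN, hsub hzN] at hz
  by_cases hz₀ : z ∈ gammaSet p.1 p.2
  · rw [gammaSet_eq_range] at hz₀ hzN
    obtain ⟨n, rfl⟩ := hz₀
    refine ⟨n, show n < N from lt_of_not_ge fun hn => hzN ⟨n - N, ?_⟩, rfl⟩
    rw [gammaPt_add_nat, Nat.sub_add_cancel hn]
  · simp [gammaInd, hzN, hz₀] at hz

lemma exists_gammaSumMult_eq_add_of_finite_inter {S : Set ℂ} {s : Multiset (ℝ × ℂ)}
    (hs : ∀ p ∈ s, 0 < p.1 ∧ (gammaSet p.1 p.2 ∩ S).Finite) :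
    ∃ s' : Multiset (ℝ × ℂ), (∀ p ∈ s', 0 < p.1) ∧ (∀ z ∈ S, gammaSumMult s' z = 0) ∧
      ∃ e : ℂ → ℕ, e.support.Finite ∧ gammaSumMult s = gammaSumMult s' + e := by
  induction s using Multiset.induction_on with
  | empty => exact ⟨0, by simp, by simp, (0 : ℂ → ℕ), by simp, by simp⟩
  | cons p s ih =>
    rw [Multiset.forall_mem_cons] at hs
    obtain ⟨s', hs'pos, hs'S, e, he, hse⟩ := ih hs.2
    obtain ⟨N, hN⟩ := exists_disjoint_gammaSet_add_nat hs.1.1.ne' hs.1.2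
    obtain ⟨e₀, he₀, hpe⟩ := exists_gammaInd_eq_add_nat_add p N
    refine ⟨(p.1, p.2 + N) ::ₘ s', Multiset.forall_mem_cons.2 ⟨hs.1.1, hs'pos⟩, fun z hz => ?_,
      e₀ + e, (he₀.union he).subset (support_add _ _), ?_⟩
    · rw [gammaSumMult_cons, Pi.add_apply, hs'S z hz, add_zero]
      exact indicator_of_notMem (disjoint_right.1 hN hz) _
    · rw [gammaSumMult_cons, gammaSumMult_cons, hse, hpe]
      abel

lemma IsGammaSumAddFinite.tsub_gammaInd {f : ℂ → ℕ} (hf : IsGammaSumAddFinite f) {w : ℝ × ℂ}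
    (hw : 0 < w.1) : IsGammaSumAddFinite (f - gammaInd w) := by
  classical
  obtain ⟨s, hs, e, he, rfl⟩ := hf
  obtain ⟨α, β⟩ := w
  set z₀ := -β / α
  set d := α⁻¹
  have hd : 0 < d := inv_pos.2 hw
  -- split `s` into the γ-sets commensurable with `w` and the others
  set C : ℝ × ℂ → Prop := fun p => ∃ Q : ℕ, 0 < Q ∧ OnLattice z₀ (d / Q) p
  obtain ⟨Q, hQ, hC⟩ := exists_onLattice_div_of_forall (s := s.filter C)
    fun p hp => (Multiset.mem_filter.1 hp).2
  have hw : OnLattice z₀ (d / Q) (α, β) := (onLattice_self α β).div_nat hQ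
  obtain ⟨t, ht, htgrid, e', he', hNt⟩ :=
    exists_gammaSumMult_eq_add_of_finite_inter (S := ratGrid z₀ d) (s := s.filter (¬C ·))
      fun p hp => by
        obtain ⟨hps, hpC⟩ := Multiset.mem_filter.1 hp
        exact ⟨hs p hps, (onLattice_or_finite_inter_ratGrid (hs p hps) z₀ hd).resolve_left hpC⟩
  have hdisj (z : ℂ) : gammaInd (α, β) z = 0 ∨ gammaSumMult t z = 0 := by
    refine or_iff_not_imp_left.2 fun hz => htgrid z ?_
    exact range_latticePt_div_subset_ratGrid z₀ d Q
      (hw.gammaSet_subset (mem_of_indicator_ne_zero hz))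
  rw [← Multiset.filter_add_not C s, map_add, hNt]
  refine ((isGammaSumAddFinite_tsub_of_onLattice (div_pos hd (Nat.cast_pos.2 hQ)) hC hw).add
    (isGammaSumAddFinite_gammaSumMult ht)).of_le (fun z => ?_)
    ((he.union he').subset fun z hz => ?_)
  · have := hdisj z
    simp only [Pi.add_apply, Pi.sub_apply]
    omega
  · have := hdisj z
    simp only [mem_union, mem_support]
    by_contra! h
    simp only [Pi.add_apply, Pi.sub_apply, h.1, h.2, mem_ofPred_eq] at hz
    omega

lemma IsGammaSumAddFinite.tsub_gammaSumMult {f : ℂ → ℕ} (hf : IsGammaSumAddFinite f)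
    {s : Multiset (ℝ × ℂ)} (hs : ∀ p ∈ s, 0 < p.1) :
    IsGammaSumAddFinite (f - gammaSumMult s) := by
  induction s using Multiset.induction_on generalizing f with
  | empty => simpa using hf
  | cons p s ih =>
    rw [Multiset.forall_mem_cons] at hs
    rw [gammaSumMult_cons, ← tsub_tsub]
    exact ih (hf.tsub_gammaInd hs.1) hs.2

lemma isGammaSumAddFinite_gammaMult_tsub {r s : ℕ} {α₁ : Fin r → ℝ} (β₁ : Fin r → ℂ)
    {α₂ : Fin s → ℝ} (β₂ : Fin s → ℂ) (hα₁ : ∀ i, 0 < α₁ i) (hα₂ : ∀ j, 0 < α₂ j) :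
    IsGammaSumAddFinite (gammaMult α₁ β₁ - gammaMult α₂ β₂) := by
  rw [gammaMult_eq_gammaSumMult, gammaMult_eq_gammaSumMult]
  exact (isGammaSumAddFinite_gammaSumMult (forall_mem_map_univ_pos hα₁ β₁)).tsub_gammaSumMult
    (forall_mem_map_univ_pos hα₂ β₂)

/-! ### Density -/

def HalfPlaneFinite (f : ℂ → ℕ) : Prop := ∀ T : ℝ, ({z : ℂ | -T < z.re} ∩ support f).Finite

lemma HalfPlaneFinite.add {f g : ℂ → ℕ} (hf : HalfPlaneFinite f) (hg : HalfPlaneFinite g) :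
    HalfPlaneFinite (f + g) := fun T =>
  ((hf T).union (hg T)).subset <| by
    rw [← inter_union_distrib_left]; exact inter_subset_inter_right _ (support_add _ _)

lemma halfPlaneFinite_of_finite {e : ℂ → ℕ} (he : e.support.Finite) : HalfPlaneFinite e :=
  fun _ => he.inter_of_right _

lemma neg_lt_re_gammaPt_iff {α : ℝ} (hα : 0 < α) (β : ℂ) (T : ℝ) (n : ℕ) :
    -T < (gammaPt α β n).re ↔ (n : ℝ) < α * T - β.re := by
  have : (gammaPt α β n).re = -(n + β.re) / α := by simp [gammaPt, Complex.div_ofReal_re]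
  rw [this, neg_div, neg_lt_neg_iff, div_lt_iff₀ hα]
  constructor <;> intro h <;> linarith

lemma halfPlane_inter_gammaSet {α : ℝ} (hα : 0 < α) (β : ℂ) (T : ℝ) :
    {z : ℂ | -T < z.re} ∩ gammaSet α β = gammaPt α β '' ↑(Finset.range ⌈α * T - β.re⌉₊) := by
  ext z
  simp only [gammaSet_eq_range, mem_inter_iff, mem_ofPred_eq, mem_range, mem_image,
    Finset.coe_range, mem_Iio, Nat.lt_ceil]
  constructor
  · rintro ⟨hz, n, rfl⟩
    exact ⟨n, (neg_lt_re_gammaPt_iff hα β T n).1 hz, rfl⟩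
  · rintro ⟨n, hn, rfl⟩
    exact ⟨(neg_lt_re_gammaPt_iff hα β T n).2 hn, n, rfl⟩

lemma support_gammaInd (p : ℝ × ℂ) : support (gammaInd p) = gammaSet p.1 p.2 := by
  ext z; by_cases hz : z ∈ gammaSet p.1 p.2 <;> simp [gammaInd, hz]

lemma halfPlaneFinite_gammaInd {p : ℝ × ℂ} (hp : 0 < p.1) : HalfPlaneFinite (gammaInd p) := by
  intro T
  rw [support_gammaInd, halfPlane_inter_gammaSet hp]
  exact (Finset.finite_toSet _).image _

lemma halfPlaneFinite_gammaSumMult {s : Multiset (ℝ × ℂ)} (hs : ∀ p ∈ s, 0 < p.1) :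
    HalfPlaneFinite (gammaSumMult s) := by
  induction s using Multiset.induction_on with
  | empty => exact halfPlaneFinite_of_finite (by simp)
  | cons p s ih =>
    rw [Multiset.forall_mem_cons] at hs
    rw [gammaSumMult_cons]
    exact (halfPlaneFinite_gammaInd hs.1).add (ih hs.2)

lemma support_natCast_comp (f : ℂ → ℕ) : support (fun z => (f z : ℝ)) = support f :=
  support_comp_eq Nat.cast Nat.cast_eq_zero f

lemma multCount_add {f g : ℂ → ℕ} (hf : HalfPlaneFinite f) (hg : HalfPlaneFinite g) (T : ℝ) :
    multCount (f + g) T = multCount f T + multCount g T := by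
  simp only [multCount, Pi.add_apply, Nat.cast_add]
  have hfT := hf T
  have hgT := hg T
  rw [← support_natCast_comp] at hfT hgT
  exact finsum_mem_add_distrib' hfT hgT

lemma multCount_gammaInd {p : ℝ × ℂ} (hp : 0 < p.1) (T : ℝ) :
    multCount (gammaInd p) T = ⌈p.1 * T - p.2.re⌉₊ := by
  rw [multCount, ← finsum_mem_inter_support, support_natCast_comp, support_gammaInd,
    halfPlane_inter_gammaSet hp, finsum_mem_image (gammaPt_injective hp.ne' p.2).injOn,
    finsum_mem_coe_finset]
  simp [gammaInd, gammaSet_eq_range]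

lemma tendsto_natCeil_mul_sub_div {α : ℝ} (hα : 0 < α) (b : ℝ) :
    Tendsto (fun T : ℝ => (⌈α * T - b⌉₊ : ℝ) / T) atTop (𝓝 α) := by
  have h₁ : Tendsto (fun T : ℝ => α * T - b) atTop atTop :=
    tendsto_atTop_add_const_right _ _ (tendsto_id.const_mul_atTop hα)
  have h₂ : Tendsto (fun T : ℝ => α - b / T) atTop (𝓝 α) := by
    simpa using (tendsto_const_nhds (x := α)).sub
      ((tendsto_const_nhds (x := b)).div_atTop tendsto_id)
  refine (by simpa using ((tendsto_nat_ceil_div_atTop (R := ℝ)).comp h₁).mul h₂ :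
    Tendsto (fun T => (⌈α * T - b⌉₊ : ℝ) / (α * T - b) * (α - b / T)) atTop (𝓝 α)).congr' ?_
  filter_upwards [h₁.eventually_gt_atTop 0, eventually_gt_atTop 0] with T h hT
  field_simp

lemma hasMultDensity_gammaInd {p : ℝ × ℂ} (hp : 0 < p.1) : HasMultDensity (gammaInd p) p.1 := by
  simpa only [HasMultDensity, multCount_gammaInd hp] using tendsto_natCeil_mul_sub_div hp p.2.re

lemma hasMultDensity_of_finite {e : ℂ → ℕ} (he : e.support.Finite) : HasMultDensity e 0 := by
  obtain ⟨R, hR⟩ := (he.image fun z => -z.re).bddAbove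
  have hconst : ∀ᶠ T in atTop, multCount e T = ∑ᶠ z ∈ support e, (e z : ℝ) := by
    filter_upwards [eventually_gt_atTop R] with T hT
    rw [multCount, ← finsum_mem_inter_support, support_natCast_comp, inter_eq_right.2]
    intro z hz
    have : -z.re ≤ R := hR ⟨z, hz, rfl⟩
    show -T < z.re
    linarith
  unfold HasMultDensity
  refine ((tendsto_const_nhds (x := ∑ᶠ z ∈ support e, (e z : ℝ))).div_atTop tendsto_id).congr' ?_
  filter_upwards [hconst] with T hT
  rw [hT]
  rfl

lemma HasMultDensity.add {f g : ℂ → ℕ} {a b : ℝ} (hf : HasMultDensity f a)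
    (hg : HasMultDensity g b) (hf' : HalfPlaneFinite f) (hg' : HalfPlaneFinite g) :
    HasMultDensity (f + g) (a + b) := by
  simpa only [HasMultDensity, multCount_add hf' hg', add_div] using Tendsto.add hf hg

lemma hasMultDensity_gammaSumMult {s : Multiset (ℝ × ℂ)} (hs : ∀ p ∈ s, 0 < p.1) :
    HasMultDensity (gammaSumMult s) (s.map Prod.fst).sum := by
  induction s using Multiset.induction_on with
  | empty => exact hasMultDensity_of_finite (by simp)
  | cons p s ih =>
    rw [Multiset.forall_mem_cons] at hs
    rw [gammaSumMult_cons, Multiset.map_cons, Multiset.sum_cons]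
    exact (hasMultDensity_gammaInd hs.1).add (ih hs.2) (halfPlaneFinite_gammaInd hs.1)
      (halfPlaneFinite_gammaSumMult hs.2)

lemma hasMultDensity_gammaMult_add {k : ℕ} {α : Fin k → ℝ} (hα : ∀ i, 0 < α i) (β : Fin k → ℂ)
    {e : ℂ → ℕ} (he : e.support.Finite) : HasMultDensity (gammaMult α β + e) (∑ i, α i) := by
  have hs := forall_mem_map_univ_pos hα β
  simpa [gammaMult_eq_gammaSumMult, Multiset.map_map, Finset.sum_eq_multiset_sum, comp_def] using
    (hasMultDensity_gammaSumMult hs).add (hasMultDensity_of_finite he)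
      (halfPlaneFinite_gammaSumMult hs) (halfPlaneFinite_of_finite he)

end

/-- **Corollary.** If `V₁ = ∑_{i=1}^r W_i¹` and `V₂ = ∑_{j=1}^s W_j²` are finite multiset sums
of γ-sets, then the multiset difference `V₁ \ V₂` is either finite or has strictly positive
density; in the latter case it is a union (multiset sum) of γ-sets and a finite multiset. -/
theorem gammaMultiset_diff (r s : ℕ) (α₁ : Fin r → ℝ) (β₁ : Fin r → ℂ)
    (α₂ : Fin s → ℝ) (β₂ : Fin s → ℂ) (hα₁ : ∀ i, 0 < α₁ i) (hα₂ : ∀ j, 0 < α₂ j) :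
    (Function.support fun z => gammaMult α₁ β₁ z - gammaMult α₂ β₂ z).Finite ∨
    ((∃ d : ℝ, 0 < d ∧ HasMultDensity (fun z => gammaMult α₁ β₁ z - gammaMult α₂ β₂ z) d) ∧
      ∃ (k : ℕ) (αs : Fin k → ℝ) (βs : Fin k → ℂ) (e : ℂ → ℕ),
        (∀ i, 0 < αs i) ∧ (Function.support e).Finite ∧
        ∀ z : ℂ, gammaMult α₁ β₁ z - gammaMult α₂ β₂ z = gammaMult αs βs z + e z) := by
  obtain ⟨t, ht, e, he, hdiff⟩ := isGammaSumAddFinite_gammaMult_tsub β₁ β₂ hα₁ hα₂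
  obtain ⟨k, αs, βs, rfl⟩ := exists_eq_map_univ_pair t
  have hαs : ∀ i, 0 < αs i := fun i => ht _ (Multiset.mem_map_of_mem _ (Finset.mem_univ i))
  have hdiff' : (fun z => gammaMult α₁ β₁ z - gammaMult α₂ β₂ z) = gammaMult αs βs + e := by
    rw [gammaMult_eq_gammaSumMult αs βs]
    exact hdiff
  rcases Nat.eq_zero_or_pos k with rfl | hk
  · have : gammaMult αs βs = 0 := funext fun z => Finset.sum_of_isEmpty _
    exact Or.inl (by rwa [hdiff', this, zero_add])
  · exact Or.inr ⟨⟨∑ i, αs i, Finset.sum_pos (fun i _ => hαs i) ⟨⟨0, hk⟩, Finset.mem_univ _⟩,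
      hdiff' ▸ hasMultDensity_gammaMult_add hαs βs he⟩, k, αs, βs, e, hαs, he, congrFun hdiff'⟩
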